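/- arXiv:2208.12725 — 3 statements merged into one kernel-verified Lean document; each statement's English description precedes it below -/
import Mathlib

section
/- Let K be an algebraically closed field and let F and B be coprime homogeneous polynomials in K[x,y,z] such that F(x,y,0) and B(x,y,0) have no common root in ℙ¹. Then z is a non-zero divisor in the quotient ring K[x,y,z]/(F,B). -/
/-!
View `K[x,y,z]` as `S[z]` with `S = K[x,y]`. Over an algebraically closed field, a nonunit of
`K[x,y]` vanishes at some point other than the origin (Nullstellensatz: otherwise it would divide
powers of both `x` and `y`), so `F(x,y,0)` and `B(x,y,0)` are relatively prime in `S`. If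
`z P = U F + V B`, comparing constant terms gives a syzygy of the relatively prime pair
`F(x,y,0), B(x,y,0)`, which is a multiple of the Koszul one `(B(x,y,0), -F(x,y,0))`; correcting
`U, V` by that multiple of `(B, -F)` makes both divisible by `z`, and cancelling `z` puts `P`
in `(F, B)`.
-/

namespace MvPolynomial

variable {σ K : Type*} [Field K] [IsAlgClosed K] [Finite σ] [Nontrivial σ]

theorem exists_ne_zero_eval_eq_zero_of_not_isUnit {d : MvPolynomial σ K} (hd : ¬IsUnit d) :
    ∃ x : σ → K, x ≠ 0 ∧ eval x d = 0 := by
  by_contra! h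
  have hX_dvd (i : σ) : ∃ m : ℕ, d ∣ X i ^ m := by
    have hX : X i ∈ vanishingIdeal K (zeroLocus K (Ideal.span {d})) := fun x hx ↦ by
      have hx0 : x = 0 := by
        by_contra hx0
        exact h x hx0 (hx d (Ideal.mem_span_singleton_self d))
      simp [hx0]
    rw [vanishingIdeal_zeroLocus_eq_radical] at hX
    obtain ⟨m, hm⟩ := hX
    exact ⟨m, Ideal.mem_span_singleton.mp hm⟩
  obtain ⟨i, j, hij⟩ := exists_pair_ne σ
  obtain ⟨m, hm⟩ := hX_dvd i
  obtain ⟨n, hn⟩ := hX_dvd j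
  have hrel : IsRelPrime (X i : MvPolynomial σ K) (X j) :=
    X_prime.irreducible.isRelPrime_iff_not_dvd.mpr (by simpa using hij)
  exact hd (hrel.pow hm hn)

theorem isRelPrime_of_no_common_nonzero_root {f g : MvPolynomial σ K}
    (h : ∀ x : σ → K, x ≠ 0 → ¬(eval x f = 0 ∧ eval x g = 0)) : IsRelPrime f g := by
  intro d hf hg
  by_contra hd
  obtain ⟨x, hx, hdx⟩ := exists_ne_zero_eval_eq_zero_of_not_isUnit hd
  exact h x hx ⟨zero_dvd_iff.mp (hdx ▸ map_dvd (eval x) hf),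
    zero_dvd_iff.mp (hdx ▸ map_dvd (eval x) hg)⟩

theorem eval_coeff_zero_finSuccEquiv {R : Type*} [CommSemiring R] {n : ℕ}
    (s : Fin n → R) (f : MvPolynomial (Fin (n + 1)) R) :
    eval s ((finSuccEquiv R n f).coeff 0) = eval (Fin.cons 0 s) f := by
  rw [eval_eq_eval_mv_eval', Polynomial.eval_zero_map, Polynomial.coeff_zero_eq_eval_zero]

end MvPolynomial

theorem IsRelPrime.exists_eq_mul_of_mul_add_mul_eq_zero {R : Type*} [CommRing R]
    [NoZeroDivisors R] [DecompositionMonoid R] {a b u v : R} (hab : IsRelPrime a b)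
    (h : u * a + v * b = 0) : ∃ c, u = c * b ∧ v = -(c * a) := by
  obtain ⟨c, rfl⟩ : b ∣ u := hab.symm.dvd_of_dvd_mul_right ⟨-v, by linear_combination h⟩
  obtain ⟨c', rfl⟩ : a ∣ v := hab.dvd_of_dvd_mul_right ⟨-(b * c), by linear_combination h⟩
  have habc : a * b * (c + c') = 0 := by linear_combination h
  rcases mul_eq_zero.mp habc with hab0 | hcc
  · rcases mul_eq_zero.mp hab0 with rfl | rfl
    · exact ⟨c, by ring, by ring⟩
    · exact ⟨-c', by ring, by ring⟩
  · exact ⟨c, by ring, by linear_combination hcc * a⟩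

namespace Polynomial

variable {R : Type*} [CommRing R] [IsDomain R] [DecompositionMonoid R]

theorem mem_span_pair_of_X_mul_mem {f g p : R[X]} (hfg : IsRelPrime (f.coeff 0) (g.coeff 0))
    (h : X * p ∈ Ideal.span {f, g}) : p ∈ Ideal.span {f, g} := by
  obtain ⟨u, v, huv⟩ := Ideal.mem_span_pair.mp h
  have h0 : u.coeff 0 * f.coeff 0 + v.coeff 0 * g.coeff 0 = 0 := by
    simpa [mul_coeff_zero] using congrArg (coeff · 0) huv
  obtain ⟨c, hu, hv⟩ := hfg.exists_eq_mul_of_mul_add_mul_eq_zero h0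
  obtain ⟨u', hu'⟩ : X ∣ u - C c * g := by simp [X_dvd_iff, hu]
  obtain ⟨v', hv'⟩ : X ∣ v + C c * f := by simp [X_dvd_iff, hv]
  refine Ideal.mem_span_pair.mpr ⟨u', v', mul_left_cancel₀ X_ne_zero ?_⟩
  linear_combination huv - f * hu' - g * hv'

theorem mk_X_mem_nonZeroDivisors {f g : R[X]} (hfg : IsRelPrime (f.coeff 0) (g.coeff 0)) :
    Ideal.Quotient.mk (Ideal.span {f, g}) X ∈ nonZeroDivisors (R[X] ⧸ Ideal.span {f, g}) := by
  refine mem_nonZeroDivisors_iff_right.mpr fun q hq ↦ ?_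
  obtain ⟨p, rfl⟩ := Ideal.Quotient.mk_surjective q
  rw [← map_mul, Ideal.Quotient.eq_zero_iff_mem, mul_comm] at hq
  exact Ideal.Quotient.eq_zero_iff_mem.mpr (mem_span_pair_of_X_mul_mem hfg hq)

end Polynomial

theorem Ideal.mk_mem_nonZeroDivisors_of_ringEquiv {R S : Type*} [CommRing R] [CommRing S]
    (e : R ≃+* S) {I : Ideal R} {J : Ideal S} (hIJ : J = I.map (e : R →+* S)) {r : R}
    (h : Ideal.Quotient.mk J (e r) ∈ nonZeroDivisors (S ⧸ J)) :
    Ideal.Quotient.mk I r ∈ nonZeroDivisors (R ⧸ I) := by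
  have hφ := Submonoid.mem_map_of_mem (Ideal.quotientEquiv I J e hIJ).symm h
  rwa [MulEquivClass.map_nonZeroDivisors, Ideal.quotientEquiv_symm_mk, RingEquiv.symm_apply_apply]
    at hφ

theorem z_nonZeroDivisor_of_no_common_root_at_infinity_general
    (K : Type) [Field K] [IsAlgClosed K]
    (F B : MvPolynomial (Fin 3) K)
    (hroot : ∀ a b : K, ¬ (a = 0 ∧ b = 0) →
      ¬ (MvPolynomial.eval ![a, b, 0] F = 0 ∧ MvPolynomial.eval ![a, b, 0] B = 0)) :
    Ideal.Quotient.mk (Ideal.span {F, B}) (MvPolynomial.X 2)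
      ∈ nonZeroDivisors (MvPolynomial (Fin 3) K ⧸ Ideal.span {F, B}) := by
  let E := (MvPolynomial.renameEquiv K (finRotate 3)).trans (MvPolynomial.finSuccEquiv K 2)
  have hEX : E (MvPolynomial.X 2) = Polynomial.X := by
    simp [E, show finRotate 3 2 = 0 from rfl, MvPolynomial.finSuccEquiv_X_zero]
  have hE_coeff_zero (r : MvPolynomial (Fin 3) K) (s : Fin 2 → K) :
      MvPolynomial.eval s ((E r).coeff 0) = MvPolynomial.eval ![s 0, s 1, 0] r := by
    rw [AlgEquiv.trans_apply, MvPolynomial.eval_coeff_zero_finSuccEquiv,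
      MvPolynomial.renameEquiv_apply, MvPolynomial.eval_rename]
    congr 2
    ext i
    fin_cases i <;> rfl
  have hrel : IsRelPrime ((E F).coeff 0) ((E B).coeff 0) := by
    refine MvPolynomial.isRelPrime_of_no_common_nonzero_root fun s hs ↦ ?_
    rw [hE_coeff_zero, hE_coeff_zero]
    refine hroot (s 0) (s 1) fun h0 ↦ hs ?_
    ext i
    fin_cases i
    exacts [h0.1, h0.2]
  refine Ideal.mk_mem_nonZeroDivisors_of_ringEquiv E.toRingEquiv
    (J := Ideal.span {E F, E B}) (by simp [Ideal.map_span, Set.image_pair]) ?_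
  simpa [hEX] using Polynomial.mk_X_mem_nonZeroDivisors hrel

theorem z_nonZeroDivisor_of_no_common_root_at_infinity
    (K : Type) [Field K] [IsAlgClosed K]
    (F B : MvPolynomial (Fin 3) K) (dF dB : ℕ)
    (hF : F.IsHomogeneous dF) (hB : B.IsHomogeneous dB)
    (hcop : ∀ d : MvPolynomial (Fin 3) K, d ∣ F → d ∣ B → IsUnit d)
    (hroot : ∀ a b : K, ¬ (a = 0 ∧ b = 0) →
      ¬ (MvPolynomial.eval ![a, b, 0] F = 0 ∧ MvPolynomial.eval ![a, b, 0] B = 0)) :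
    Ideal.Quotient.mk (Ideal.span {F, B}) (MvPolynomial.X 2)
      ∈ nonZeroDivisors (MvPolynomial (Fin 3) K ⧸ Ideal.span {F, B}) :=
  z_nonZeroDivisor_of_no_common_root_at_infinity_general K F B hroot
end

section
/- Weierstraß preparation: Let K be a field and let f = Σ_{i=0}^∞ f_i(x) y^i ∈ K[[x]][[y]] be such that there exists a positive integer n satisfying val_x(f_n(x)) = 0 and val_x(f_i(x)) > 0 for all i < n. Then there exist u invertible in K[[x,y]] and g ∈ K[[x]][y] monic of degree n in y such that f = u·g. -/
/-!
`K⟦x⟧` is a complete local ring with maximal ideal `(x)`, and the hypotheses say exactly that the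
image of `f` in `K⟦y⟧` (reduction modulo `x`) has `y`-order `n`. This is the hypothesis of the
Weierstrass preparation theorem over a complete local ring, which gives `f` as a unit times a
distinguished polynomial, whose degree is that order.
-/

open IsLocalRing

namespace PowerSeries

variable {A : Type*} [CommRing A] [IsLocalRing A]

theorem order_map_residue_eq {g : A⟦X⟧} {n : ℕ} (hn : IsUnit (coeff n g))
    (hlt : ∀ i < n, coeff i g ∈ maximalIdeal A) :
    (g.map (residue A)).order = n := by
  rw [order_eq_nat]
  refine ⟨?_, fun i hi => ?_⟩
  · rw [coeff_map, ne_eq, residue_eq_zero_iff]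
    exact fun h => h hn
  · rw [coeff_map, residue_eq_zero_iff]
    exact hlt i hi

theorem exists_isUnit_monic_mul_of_isUnit_coeff [IsAdicComplete (maximalIdeal A) A]
    {g : A⟦X⟧} {n : ℕ} (hn : IsUnit (coeff n g))
    (hlt : ∀ i < n, coeff i g ∈ maximalIdeal A) :
    ∃ (u : A⟦X⟧) (f : Polynomial A), IsUnit u ∧ f.Monic ∧ f.natDegree = n ∧
      g = u * Polynomial.coeToPowerSeries.ringHom f := by
  have horder := order_map_residue_eq hn hlt
  have hg : g.map (residue A) ≠ 0 := by
    rw [← order_finite_iff_ne_zero, horder]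
    exact ENat.natCast_lt_top n
  obtain ⟨f, u, H⟩ := g.exists_isWeierstrassFactorization hg
  refine ⟨u, f, H.isUnit, H.isDistinguishedAt.monic, ?_, ?_⟩
  · rw [H.natDegree_eq_toNat_order_map, horder, ENat.toNat_natCast]
  · rw [H.eq_mul, mul_comm]
    rfl

instance isAdicComplete_maximalIdeal (K : Type*) [Field K] :
    IsAdicComplete (maximalIdeal K⟦X⟧) K⟦X⟧ := by
  rw [maximalIdeal_eq_span_X]
  infer_instance

end PowerSeries

theorem weierstrass_preparation_general
    (K : Type) [Field K]
    (f : PowerSeries (PowerSeries K)) (n : ℕ)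
    (hfn : PowerSeries.constantCoeff (R := K) (PowerSeries.coeff (R := PowerSeries K) n f) ≠ 0)
    (hfi : ∀ i < n, PowerSeries.constantCoeff (R := K) (PowerSeries.coeff (R := PowerSeries K) i f) = 0) :
    ∃ (u : PowerSeries (PowerSeries K)) (g : Polynomial (PowerSeries K)),
      IsUnit u ∧ g.Monic ∧ g.natDegree = n ∧
      f = u * Polynomial.coeToPowerSeries.ringHom g := by
  refine PowerSeries.exists_isUnit_monic_mul_of_isUnit_coeff ?_ fun i hi => ?_
  · rwa [PowerSeries.isUnit_iff_constantCoeff, isUnit_iff_ne_zero]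
  · rw [← PowerSeries.ker_coeff_eq_max_ideal]
    exact hfi i hi

theorem weierstrass_preparation
    (K : Type) [Field K]
    (f : PowerSeries (PowerSeries K)) (n : ℕ) (hn : 0 < n)
    (hfn : PowerSeries.constantCoeff (R := K) (PowerSeries.coeff (R := PowerSeries K) n f) ≠ 0)
    (hfi : ∀ i < n, PowerSeries.constantCoeff (R := K) (PowerSeries.coeff (R := PowerSeries K) i f) = 0) :
    ∃ (u : PowerSeries (PowerSeries K)) (g : Polynomial (PowerSeries K)),
      IsUnit u ∧ g.Monic ∧ g.natDegree = n ∧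
      f = u * Polynomial.coeToPowerSeries.ringHom g :=
  weierstrass_preparation_general K f n hfn hfi
end

section
/- Fix coprime natural numbers γ_x ≠ 0 and γ_y defining the weighted valuation val on K[[x,y]]. Let f, g ∈ K[[x]][y]. If g is monic in y of degree n and val(g) = val(y^n) = γ_y·n, then the remainder f rem g in the Euclidean division of f by g in K[[x]][y] satisfies val(f rem g) ≥ val(f). -/
/-!
The Euclidean division is a sequence of steps `f ↦ f - g · lc(f) y^(deg f - n)`, and no step
lowers the valuation. Indeed `val` is superadditive on products and
`val (a - b) ≥ min (val a) (val b)`; if `lc(f)` has `x`-order `i`, then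
`val f ≤ γx·i + γy·deg f ≤ val (lc(f) y^(deg f - n)) + val g`, because `val g = γy·n`.

`K[[x,y]]` is modelled as `K⟦X⟧⟦X⟧` (outer variable `y`, inner variable `x`) and
`K[[x]][y]` as `K⟦X⟧[X]`, embedded by the coercion `Polynomial.coeToPowerSeries.ringHom`.
-/

noncomputable section

/-- coefficient of `x^i y^j`. -/
def coeff2 {K : Type} [Field K] (i j : ℕ) (a : PowerSeries (PowerSeries K)) : K :=
  PowerSeries.coeff (R := K) i (PowerSeries.coeff (R := PowerSeries K) j a)

/-- the weighted valuation attached to the weights `γx`, `γy`. -/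
def wval {K : Type} [Field K] (γx γy : ℕ) (a : PowerSeries (PowerSeries K)) : ℕ∞ :=
  ⨅ (i : ℕ) (j : ℕ) (_ : coeff2 i j a ≠ 0), ((γx * i + γy * j : ℕ) : ℕ∞)

open Polynomial
open scoped PowerSeries

section

variable {K : Type} [Field K] {γx γy : ℕ}

lemma le_wval_iff {m : ℕ∞} {a : K⟦X⟧⟦X⟧} :
    m ≤ wval γx γy a ↔ ∀ i j, coeff2 i j a ≠ 0 → m ≤ ((γx * i + γy * j : ℕ) : ℕ∞) := by
  simp [wval, le_iInf_iff]

lemma wval_le_of_coeff2_ne_zero {a : K⟦X⟧⟦X⟧} {i j : ℕ} (h : coeff2 i j a ≠ 0) :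
    wval γx γy a ≤ ((γx * i + γy * j : ℕ) : ℕ∞) :=
  le_wval_iff.mp le_rfl i j h

@[simp]
lemma wval_zero : wval γx γy (0 : K⟦X⟧⟦X⟧) = ⊤ := by
  simp [wval, coeff2]

lemma coeff2_sub (i j : ℕ) (a b : K⟦X⟧⟦X⟧) :
    coeff2 i j (a - b) = coeff2 i j a - coeff2 i j b := by
  simp [coeff2]

lemma coeff2_mul (i j : ℕ) (a b : K⟦X⟧⟦X⟧) :
    coeff2 i j (a * b) = ∑ p ∈ Finset.HasAntidiagonal.antidiagonal j,
      ∑ q ∈ Finset.HasAntidiagonal.antidiagonal i, coeff2 q.1 p.1 a * coeff2 q.2 p.2 b := by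
  simp [coeff2, PowerSeries.coeff_mul, map_sum]

lemma coeff2_coe (i j : ℕ) (p : K⟦X⟧[X]) :
    coeff2 i j (p : K⟦X⟧⟦X⟧) = PowerSeries.coeff i (p.coeff j) := by
  simp [coeff2]

lemma min_le_wval_sub (a b : K⟦X⟧⟦X⟧) :
    min (wval γx γy a) (wval γx γy b) ≤ wval γx γy (a - b) := by
  refine le_wval_iff.mpr fun i j h ↦ ?_
  by_cases ha : coeff2 i j a = 0
  · have hb : coeff2 i j b ≠ 0 := by simpa [coeff2_sub, ha] using h
    exact (min_le_right _ _).trans (wval_le_of_coeff2_ne_zero hb)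
  · exact (min_le_left _ _).trans (wval_le_of_coeff2_ne_zero ha)

lemma add_le_wval_mul (a b : K⟦X⟧⟦X⟧) :
    wval γx γy a + wval γx γy b ≤ wval γx γy (a * b) := by
  refine le_wval_iff.mpr fun i j h ↦ ?_
  rw [coeff2_mul] at h
  obtain ⟨p, hp, h⟩ := Finset.exists_ne_zero_of_sum_ne_zero h
  obtain ⟨q, hq, h⟩ := Finset.exists_ne_zero_of_sum_ne_zero h
  rw [Finset.HasAntidiagonal.mem_antidiagonal] at hp hq
  calc wval γx γy a + wval γx γy b
      ≤ ((γx * q.1 + γy * p.1 : ℕ) : ℕ∞) + ((γx * q.2 + γy * p.2 : ℕ) : ℕ∞) :=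
        add_le_add (wval_le_of_coeff2_ne_zero (left_ne_zero_of_mul h))
          (wval_le_of_coeff2_ne_zero (right_ne_zero_of_mul h))
    _ = ((γx * i + γy * j : ℕ) : ℕ∞) := by
        rw [← Nat.cast_add, ← hp, ← hq]; ring_nf

lemma wval_coe_le_leadingTerm {f : K⟦X⟧[X]} (hf : f ≠ 0) :
    wval γx γy (f : K⟦X⟧⟦X⟧) ≤ ((γx * f.leadingCoeff.order.toNat + γy * f.natDegree : ℕ) : ℕ∞) :=
  wval_le_of_coeff2_ne_zero <| by
    rw [coeff2_coe]
    exact PowerSeries.coeff_order (leadingCoeff_ne_zero.mpr hf)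

lemma le_wval_coe_C_mul_X_pow (c : K⟦X⟧) (k : ℕ) :
    ((γx * c.order.toNat + γy * k : ℕ) : ℕ∞) ≤ wval γx γy ((C c * X ^ k : K⟦X⟧[X]) : K⟦X⟧⟦X⟧) := by
  refine le_wval_iff.mpr fun i j h ↦ ?_
  rw [coeff2_coe, coeff_C_mul_X_pow] at h
  split_ifs at h with hjk
  · have : c.order.toNat ≤ i := not_lt.mp fun hi ↦ h (PowerSeries.coeff_of_lt_order_toNat i hi)
    subst hjk
    gcongr
  · simp at h

variable {g : K⟦X⟧[X]}

lemma wval_coe_le_wval_coe_sub_leadingTerm_mul {f : K⟦X⟧[X]} (hf : f ≠ 0)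
    (hval : ((γy * g.natDegree : ℕ) : ℕ∞) ≤ wval γx γy (g : K⟦X⟧⟦X⟧))
    (hdeg : g.natDegree ≤ f.natDegree) :
    wval γx γy (f : K⟦X⟧⟦X⟧) ≤
      wval γx γy ((f - g * (C f.leadingCoeff * X ^ (f.natDegree - g.natDegree)) : K⟦X⟧[X]) :
        K⟦X⟧⟦X⟧) := by
  set o := f.leadingCoeff.order.toNat
  set q : K⟦X⟧[X] := C f.leadingCoeff * X ^ (f.natDegree - g.natDegree)
  have hmul : wval γx γy (f : K⟦X⟧⟦X⟧) ≤ wval γx γy ((g : K⟦X⟧⟦X⟧) * (q : K⟦X⟧⟦X⟧)) := calc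
    _ ≤ ((γx * o + γy * f.natDegree : ℕ) : ℕ∞) := wval_coe_le_leadingTerm hf
    _ = ((γy * g.natDegree : ℕ) : ℕ∞) +
          ((γx * o + γy * (f.natDegree - g.natDegree) : ℕ) : ℕ∞) := by
      obtain ⟨d, hd⟩ := Nat.exists_eq_add_of_le hdeg
      rw [← Nat.cast_add, hd, Nat.add_sub_cancel_left]
      ring_nf
    _ ≤ wval γx γy (g : K⟦X⟧⟦X⟧) + wval γx γy (q : K⟦X⟧⟦X⟧) :=
      add_le_add hval (le_wval_coe_C_mul_X_pow _ _)
    _ ≤ _ := add_le_wval_mul _ _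
  rw [coe_sub, Polynomial.coe_mul]
  exact (le_min le_rfl hmul).trans (min_le_wval_sub _ _)

theorem wval_coe_le_wval_coe_modByMonic (hg : g.Monic)
    (hval : ((γy * g.natDegree : ℕ) : ℕ∞) ≤ wval γx γy (g : K⟦X⟧⟦X⟧)) (f : K⟦X⟧[X]) :
    wval γx γy (f : K⟦X⟧⟦X⟧) ≤ wval γx γy ((f %ₘ g : K⟦X⟧[X]) : K⟦X⟧⟦X⟧) := by
  by_cases hfg : g.degree ≤ f.degree ∧ f ≠ 0
  · have hdeg : g.natDegree ≤ f.natDegree := natDegree_le_natDegree hfg.1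
    have _wf := div_wf_lemma hfg hg
    have hmod :
        f %ₘ g = (f - g * (C f.leadingCoeff * X ^ (f.natDegree - g.natDegree))) %ₘ g := by
      rw [sub_modByMonic, (modByMonic_eq_zero_iff_dvd hg).mpr (dvd_mul_right _ _), sub_zero]
    rw [hmod]
    exact (wval_coe_le_wval_coe_sub_leadingTerm_mul hfg.2 hval hdeg).trans
      (wval_coe_le_wval_coe_modByMonic hg hval _)
  · rcases eq_or_ne f 0 with rfl | hf
    · simp
    · rw [(modByMonic_eq_self_iff hg).mpr (lt_of_not_ge fun h ↦ hfg ⟨h, hf⟩)]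
termination_by f

end

theorem wval_modByMonic_ge_general
    (K : Type) [Field K] (γx γy : ℕ)
    (f g : Polynomial (PowerSeries K)) (n : ℕ)
    (hg : g.Monic) (hn : g.natDegree = n)
    (hval : wval γx γy (Polynomial.coeToPowerSeries.ringHom g) = ((γy * n : ℕ) : ℕ∞)) :
    wval γx γy (Polynomial.coeToPowerSeries.ringHom f)
      ≤ wval γx γy (Polynomial.coeToPowerSeries.ringHom (f %ₘ g)) := by
  simp only [coeToPowerSeries.ringHom_apply] at hval ⊢
  exact wval_coe_le_wval_coe_modByMonic hg (hn ▸ hval.ge) f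

theorem wval_modByMonic_ge
    (K : Type) [Field K] (γx γy : ℕ) (hγx : γx ≠ 0) (hcop : Nat.Coprime γx γy)
    (f g : Polynomial (PowerSeries K)) (n : ℕ)
    (hg : g.Monic) (hn : g.natDegree = n)
    (hval : wval γx γy (Polynomial.coeToPowerSeries.ringHom g) = ((γy * n : ℕ) : ℕ∞)) :
    wval γx γy (Polynomial.coeToPowerSeries.ringHom f)
      ≤ wval γx γy (Polynomial.coeToPowerSeries.ringHom (f %ₘ g)) :=
  wval_modByMonic_ge_general K γx γy f g n hg hn hval

end
end
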